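/- arXiv:quant-ph/0511247 — 4 statements merged into one kernel-verified Lean document; each statement's English description precedes it below -/
import Mathlib

section
/- Let P be a joint probability mass function on a finite set 𝒳 × 𝒴 × 𝒵, and let 𝒟 denote the (finite) set of conditional distributions Φ(x,y) := P_{Z|X=x,Y=y} as (x,y) ranges over the support of the marginal P_{XY}. Define the purified version P̄ as the joint distribution of (X, Y, Φ(X,Y)) on (𝒳 × 𝒴) × 𝒟. Then: (i) P̄ is bi-disjoint between the pair (X,Y) and the third variable; and (ii) there is a stochastic map Λ from 𝒟 to 𝒵, given by Λ(z | d) = d(z), such that P(x,y,z) = ∑_{d ∈ 𝒟} P̄(x,y,d)·Λ(z|d) for all (x,y,z). -/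
/-!
STATEMENT 4: Let `P` be a joint pmf on `𝒳 × 𝒴 × 𝒵` and let `𝒟` be the (finite) set of
conditional distributions `Φ(x,y) = P_{Z|X=x,Y=y}` as `(x,y)` ranges over the support of
the marginal `P_{XY}`.  The purified version `P̄`, the joint distribution of
`(X, Y, Φ(X,Y))` on `(𝒳 × 𝒴) × 𝒟`, is (i) bi-disjoint between `(X,Y)` and the third
variable, and (ii) satisfies `P(x,y,z) = ∑ d ∈ 𝒟, P̄(x,y,d) · Λ(z|d)` for the stochastic
map `Λ(z|d) = d z` (each `d ∈ 𝒟` being a pmf on `𝒵`).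
-/

open scoped Classical
open Finset

/-- A joint pmf `P` on `T × W` (curried) is bi-disjoint if `P t w = ∑ i, p i * Q i t * R i w`
for some pmf `p` on a finite label set with all weights positive, pmfs `Q i` on `T` with
pairwise disjoint supports, and pmfs `R i` on `W` with pairwise disjoint supports. -/
def IsBiDisjoint {T W : Type*} [Fintype T] [Fintype W] (P : T → W → ℝ) : Prop :=
  ∃ (m : ℕ) (p : Fin m → ℝ) (Q : Fin m → T → ℝ) (R : Fin m → W → ℝ),
    (∀ i, 0 < p i) ∧ (∑ i, p i = 1) ∧
    (∀ i t, 0 ≤ Q i t) ∧ (∀ i, ∑ t, Q i t = 1) ∧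
    (∀ i w, 0 ≤ R i w) ∧ (∀ i, ∑ w, R i w = 1) ∧
    (∀ i j, i ≠ j → ∀ t, Q i t = 0 ∨ Q j t = 0) ∧
    (∀ i j, i ≠ j → ∀ w, R i w = 0 ∨ R j w = 0) ∧
    (∀ t w, P t w = ∑ i, p i * Q i t * R i w)

variable {𝒳 𝒴 𝒵 : Type*} [Fintype 𝒳] [Fintype 𝒴] [Fintype 𝒵]

/-- Marginal distribution of the pair `(X, Y)`. -/
noncomputable def margXY (P : 𝒳 × 𝒴 × 𝒵 → ℝ) : 𝒳 × 𝒴 → ℝ := fun q => ∑ z, P (q.1, q.2, z)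

/-- The conditional distribution `Φ(x,y) = P_{Z|X=x,Y=y}` of `Z` given `(X,Y) = (x,y)`. -/
noncomputable def condZ (P : 𝒳 × 𝒴 × 𝒵 → ℝ) (q : 𝒳 × 𝒴) : 𝒵 → ℝ :=
  fun z => P (q.1, q.2, z) / margXY P q

/-- The finite set `𝒟` of conditional distributions of `Z` given `(X,Y)`, as `(x,y)` ranges
over the support of the marginal `P_{XY}`. -/
noncomputable def condSet (P : 𝒳 × 𝒴 × 𝒵 → ℝ) : Finset (𝒵 → ℝ) :=
  (Finset.univ.filter fun q : 𝒳 × 𝒴 => 0 < margXY P q).image (condZ P)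

/-- The purified version `P̄` of `P`: the joint distribution of `(X, Y, Φ(X,Y))` on
`(𝒳 × 𝒴) × 𝒟`. -/
noncomputable def purified (P : 𝒳 × 𝒴 × 𝒵 → ℝ) :
    (𝒳 × 𝒴) → {d // d ∈ condSet P} → ℝ :=
  fun q d => if condZ P q = (d : 𝒵 → ℝ) then margXY P q else 0

theorem purified_biDisjoint_and_degrades (P : 𝒳 × 𝒴 × 𝒵 → ℝ)
    (h0 : ∀ w, 0 ≤ P w) (h1 : ∑ w, P w = 1) :
    -- (i) the purified version is bi-disjoint between (X,Y) and 𝒟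
    IsBiDisjoint (purified P) ∧
    -- the map Λ(z|d) = d z is a stochastic map from 𝒟 to 𝒵
    (∀ d : {d // d ∈ condSet P}, (∀ z, 0 ≤ (d : 𝒵 → ℝ) z) ∧ (∑ z, (d : 𝒵 → ℝ) z = 1)) ∧
    -- (ii) P is recovered from P̄ by applying Λ to the third variable
    (∀ x y z, P (x, y, z)
        = ∑ d : {d // d ∈ condSet P}, purified P (x, y) d * (d : 𝒵 → ℝ) z) := by
  classical
  have hm0 : ∀ q : 𝒳 × 𝒴, 0 ≤ margXY P q := fun q =>
    Finset.sum_nonneg fun z _ => h0 _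
  have hPle : ∀ x y z, P (x, y, z) ≤ margXY P (x, y) := fun x y z =>
    Finset.single_le_sum (fun z _ => h0 ((x, y, z) : 𝒳 × 𝒴 × 𝒵)) (Finset.mem_univ z)
  have hmem : ∀ q : 𝒳 × 𝒴, 0 < margXY P q → condZ P q ∈ condSet P := fun q hq =>
    Finset.mem_image.2 ⟨q, Finset.mem_filter.2 ⟨Finset.mem_univ _, hq⟩, rfl⟩
  set D := {d // d ∈ condSet P} with hD
  -- sum of purified over d equals the marginal
  have hsum : ∀ q : 𝒳 × 𝒴, ∑ d : D, purified P q d = margXY P q := by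
    intro q
    by_cases hq : 0 < margXY P q
    · set d0 : D := ⟨condZ P q, hmem q hq⟩ with hd0
      rw [Finset.sum_eq_single d0]
      · simp [purified, d0]
      · intro d _ hd
        have hne : condZ P q ≠ (d : 𝒵 → ℝ) := by
          intro h; exact hd (Subtype.ext h.symm)
        simp [purified, hne]
      · intro h; exact absurd (Finset.mem_univ _) h
    · have hze : margXY P q = 0 := le_antisymm (not_lt.1 hq) (hm0 _)
      rw [hze]
      apply Finset.sum_eq_zero
      intro d _
      simp [purified, hze]
  have hmargsum : ∑ q : 𝒳 × 𝒴, margXY P q = 1 := by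
    rw [← h1]
    simp [margXY, Fintype.sum_prod_type]
  refine ⟨?_, ?_, ?_⟩
  · -- bi-disjointness
    set m := Fintype.card D with hm
    set e : Fin m ≃ D := (Fintype.equivFin D).symm with he
    set p : Fin m → ℝ := fun i => ∑ q, purified P q (e i) with hp
    have hppos : ∀ i, 0 < p i := by
      intro i
      obtain ⟨q, hq, hcz⟩ := Finset.mem_image.1 (e i).2
      have hq' : 0 < margXY P q := (Finset.mem_filter.1 hq).2
      refine Finset.sum_pos' (fun q' _ => ?_) ⟨q, Finset.mem_univ q, ?_⟩
      · unfold purified; split; exacts [hm0 _, le_rfl]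
      · have : purified P q (e i) = margXY P q := by
          simp [purified, hcz]
        rw [this]; exact hq'
    refine ⟨m, p, fun i q => purified P q (e i) / p i,
      fun i d => if d = e i then 1 else 0, hppos, ?_, ?_, ?_, ?_, ?_, ?_, ?_, ?_⟩
    · -- ∑ p = 1
      rw [hp]
      rw [Finset.sum_comm]
      have : ∀ q : 𝒳 × 𝒴, ∑ i : Fin m, purified P q (e i) = margXY P q := by
        intro q
        rw [e.sum_comp (fun d => purified P q d)]
        exact hsum q
      rw [Finset.sum_congr rfl fun q _ => this q, hmargsum]
    · intro i q
      apply div_nonneg _ (hppos i).le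
      unfold purified; split; exacts [hm0 _, le_rfl]
    · intro i
      rw [← Finset.sum_div, div_self (hppos i).ne']
    · intro i d; dsimp only; split <;> norm_num
    · intro i
      rw [Finset.sum_ite_eq' Finset.univ (e i) (fun _ => (1:ℝ))]
      simp
    · -- Q disjoint
      intro i j hij t
      dsimp only
      by_cases h : purified P t (e i) = 0
      · left; rw [h, zero_div]
      · right
        have hci : condZ P t = ((e i : D) : 𝒵 → ℝ) := by
          by_contra hc
          exact h (by simp [purified, hc])
        have hne : condZ P t ≠ ((e j : D) : 𝒵 → ℝ) := by
          intro hc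
          exact hij (e.injective (Subtype.ext (hci.symm.trans hc)))
        simp [purified, hne]
    · -- R disjoint
      intro i j hij d
      by_cases h : d = e i
      · right
        have : d ≠ e j := fun hc => hij (e.injective (h ▸ hc : e i = e j).symm ▸ rfl)
        simp [this]
      · left; simp [h]
    · -- factorization
      intro t w
      rw [Finset.sum_eq_single (e.symm w)]
      · dsimp only
        rw [Equiv.apply_symm_apply]
        rw [if_pos rfl, mul_one, mul_comm, div_mul_cancel₀ _ (hppos _).ne']
      · intro i _ hi
        have : w ≠ e i := by
          intro hc; exact hi (by rw [hc, Equiv.symm_apply_apply])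
        dsimp only
        rw [if_neg this, mul_zero]
      · intro h; exact absurd (Finset.mem_univ _) h
  · -- stochastic map
    rintro ⟨d, hd⟩
    obtain ⟨q, hq, rfl⟩ := Finset.mem_image.1 hd
    have hq' : 0 < margXY P q := (Finset.mem_filter.1 hq).2
    refine ⟨fun z => div_nonneg (h0 _) (hm0 q), ?_⟩
    show ∑ z, P (q.1, q.2, z) / margXY P q = 1
    rw [← Finset.sum_div]
    exact div_self hq'.ne'
  · -- recovery
    intro x y z
    by_cases hq : 0 < margXY P (x, y)
    · set d0 : D := ⟨condZ P (x, y), hmem _ hq⟩ with hd0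
      rw [Finset.sum_eq_single d0]
      · show P (x, y, z) = purified P (x, y) d0 * condZ P (x, y) z
        have h1' : purified P (x, y) d0 = margXY P (x, y) := by simp [purified, d0]
        rw [h1']
        show P (x, y, z) = margXY P (x, y) * (P (x, y, z) / margXY P (x, y))
        rw [mul_comm, div_mul_cancel₀ _ hq.ne']
      · intro d _ hd
        have hne : condZ P (x, y) ≠ (d : 𝒵 → ℝ) := fun h => hd (Subtype.ext h.symm)
        simp [purified, hne]
      · intro h; exact absurd (Finset.mem_univ _) h
    · have hze : margXY P (x, y) = 0 := le_antisymm (not_lt.1 hq) (hm0 _)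
      have hP0 : P (x, y, z) = 0 := le_antisymm (hze ▸ hPle x y z) (h0 _)
      rw [hP0]
      symm
      apply Finset.sum_eq_zero
      intro d _
      simp [purified, hze]
end

section
/- Let P be a joint probability mass function on a finite set 𝒳 × 𝒴 × 𝒵 and let P̄ on (𝒳 × 𝒴) × 𝒟 be its purified version, i.e., the joint distribution of (X, Y, Φ(X,Y)) where Φ(x,y) := P_{Z|X=x,Y=y}. Suppose P̃ is a bi-disjoint joint probability mass function on (𝒳 × 𝒴) × 𝒵̃ (bi-disjoint between the pair (X,Y) and 𝒵̃) and Λ' is a stochastic map from 𝒵̃ to 𝒵 such that P(x,y,z) = ∑_{z̃} P̃(x,y,z̃)·Λ'(z|z̃) for all (x,y,z). Then there exists a (deterministic) function g : 𝒵̃ → 𝒟 such that g(z̃) = Φ(x,y) whenever P̃(x,y,z̃) > 0; consequently the pushforward of P̃ under the map (x,y,z̃) ↦ (x,y,g(z̃)) equals P̄. -/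
/-!
STATEMENT 5 (minimality of the purified version): Let `P` be a joint pmf on
`𝒳 × 𝒴 × 𝒵` with purified version `P̄` (the joint distribution of `(X, Y, Φ(X,Y))` where
`Φ(x,y) = P_{Z|X=x,Y=y} ∈ 𝒟`).  If `P̃` is a bi-disjoint joint pmf on `(𝒳 × 𝒴) × 𝒵̃` and
`Λ'` is a stochastic map from `𝒵̃` to `𝒵` with `P(x,y,z) = ∑ z̃, P̃(x,y,z̃)·Λ'(z|z̃)`, then
there is a deterministic `g : 𝒵̃ → 𝒟` with `g z̃ = Φ(x,y)` whenever `P̃(x,y,z̃) > 0`, and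
the pushforward of `P̃` under `(x,y,z̃) ↦ (x,y,g z̃)` equals `P̄`.
-/

open scoped Classical
open Finset

variable {𝒳 𝒴 𝒵 : Type*} [Fintype 𝒳] [Fintype 𝒴] [Fintype 𝒵]

theorem purified_minimal {𝒵t : Type*} [Fintype 𝒵t]
    (P : 𝒳 × 𝒴 × 𝒵 → ℝ) (h0 : ∀ w, 0 ≤ P w) (h1 : ∑ w, P w = 1)
    -- P̃ : a bi-disjoint joint pmf on (𝒳 × 𝒴) × 𝒵̃
    (Pt : (𝒳 × 𝒴) → 𝒵t → ℝ) (hPt0 : ∀ q zt, 0 ≤ Pt q zt)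
    (hPt1 : ∑ q : 𝒳 × 𝒴, ∑ zt, Pt q zt = 1)
    (hPtBD : IsBiDisjoint Pt)
    -- Λ' : a stochastic map from 𝒵̃ to 𝒵
    (Λ' : 𝒵t → 𝒵 → ℝ) (hΛ0 : ∀ zt z, 0 ≤ Λ' zt z) (hΛ1 : ∀ zt, ∑ z, Λ' zt z = 1)
    -- P is obtained from P̃ by degrading the reference through Λ'
    (hfact : ∀ x y z, P (x, y, z) = ∑ zt, Pt (x, y) zt * Λ' zt z) :
    ∃ g : 𝒵t → {d // d ∈ condSet P},
      (∀ x y zt, 0 < Pt (x, y) zt → (g zt : 𝒵 → ℝ) = condZ P (x, y)) ∧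
      (∀ (q : 𝒳 × 𝒴) (d : {d // d ∈ condSet P}),
        purified P q d = ∑ zt, if g zt = d then Pt q zt else 0) := by
  classical
  obtain ⟨m, p, Q, R, hp, hps, hQ0, hQ1, hR0, hR1, hQd, hRd, hPeq⟩ := hPtBD
  have hm : 0 < m := by
    rcases Nat.eq_zero_or_pos m with h | h
    · exfalso; subst h; simp at hps
    · exact h
  set S : Fin m → 𝒵 → ℝ := fun i z => ∑ zt, R i zt * Λ' zt z with hS
  have hSsum : ∀ i, ∑ z, S i z = 1 := by
    intro i
    calc ∑ z, ∑ zt, R i zt * Λ' zt z = ∑ zt, ∑ z, R i zt * Λ' zt z := Finset.sum_comm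
      _ = ∑ zt, R i zt * ∑ z, Λ' zt z := by simp [Finset.mul_sum]
      _ = 1 := by simp [hΛ1, hR1]
  have margA : ∀ q : 𝒳 × 𝒴, margXY P q = ∑ zt, Pt q zt := by
    intro q
    unfold margXY
    calc ∑ z, P (q.1, q.2, z) = ∑ z, ∑ zt, Pt (q.1, q.2) zt * Λ' zt z := by
          simp only [hfact]
      _ = ∑ zt, ∑ z, Pt (q.1, q.2) zt * Λ' zt z := Finset.sum_comm
      _ = ∑ zt, Pt (q.1, q.2) zt * ∑ z, Λ' zt z := by simp [Finset.mul_sum]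
      _ = ∑ zt, Pt q zt := by simp [hΛ1]
  have uniqQ : ∀ (i : Fin m) (q : 𝒳 × 𝒴), 0 < Q i q → ∀ j, j ≠ i → Q j q = 0 := by
    intro i q hq j hj
    rcases hQd j i hj q with h | h
    · exact h
    · exact absurd h (ne_of_gt hq)
  have Pfact : ∀ (i : Fin m) (q : 𝒳 × 𝒴), 0 < Q i q → ∀ z,
      P (q.1, q.2, z) = p i * Q i q * S i z := by
    intro i q hq z
    rw [hfact]
    calc ∑ zt, Pt (q.1, q.2) zt * Λ' zt z
        = ∑ zt, (∑ j, p j * Q j q * R j zt) * Λ' zt z := by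
          simp only [hPeq, Prod.mk.eta]
      _ = ∑ zt, ∑ j, p j * Q j q * (R j zt * Λ' zt z) := by
          simp [Finset.sum_mul, mul_assoc]
      _ = ∑ j, ∑ zt, p j * Q j q * (R j zt * Λ' zt z) := Finset.sum_comm
      _ = ∑ j, p j * Q j q * S j z := by
          apply Finset.sum_congr rfl
          intro j _
          rw [Finset.mul_sum]
      _ = p i * Q i q * S i z := by
          apply Finset.sum_eq_single
          · intro j _ hj; simp [uniqQ i q hq j hj]
          · intro hi; exact absurd (Finset.mem_univ i) hi
  have margC : ∀ (i : Fin m) (q : 𝒳 × 𝒴), 0 < Q i q → margXY P q = p i * Q i q := by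
    intro i q hq
    unfold margXY
    calc ∑ z, P (q.1, q.2, z) = ∑ z, p i * Q i q * S i z := by
          simp only [Pfact i q hq]
      _ = p i * Q i q * ∑ z, S i z := by rw [Finset.mul_sum]
      _ = p i * Q i q := by rw [hSsum]; ring
  have hpQpos : ∀ (i : Fin m) (q : 𝒳 × 𝒴), 0 < Q i q → 0 < p i * Q i q :=
    fun i q hq => mul_pos (hp i) hq
  have condC : ∀ (i : Fin m) (q : 𝒳 × 𝒴), 0 < Q i q → condZ P q = S i := by
    intro i q hq
    funext z
    unfold condZ
    rw [Pfact i q hq z, margC i q hq]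
    exact mul_div_cancel_left₀ _ (ne_of_gt (hpQpos i q hq))
  have memC : ∀ i : Fin m, S i ∈ condSet P := by
    intro i
    have hex : ∃ q, 0 < Q i q := by
      by_contra hcon
      push_neg at hcon
      have : ∀ q, Q i q = 0 := fun q => le_antisymm (hcon q) (hQ0 i q)
      have h1 := hQ1 i
      rw [Finset.sum_congr rfl fun q _ => this q] at h1
      simp at h1
    obtain ⟨q, hq⟩ := hex
    unfold condSet
    apply Finset.mem_image.mpr
    refine ⟨q, ?_, condC i q hq⟩
    rw [Finset.mem_filter]
    exact ⟨Finset.mem_univ q, by rw [margC i q hq]; exact hpQpos i q hq⟩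
  let i0 : Fin m := ⟨0, hm⟩
  let g : 𝒵t → {d // d ∈ condSet P} := fun zt =>
    if h : ∃ i, 0 < R i zt then ⟨S h.choose, memC _⟩ else ⟨S i0, memC i0⟩
  have exPos : ∀ (q : 𝒳 × 𝒴) (zt : 𝒵t), 0 < Pt q zt →
      ∃ i, 0 < Q i q ∧ 0 < R i zt := by
    intro q zt hpos
    rw [hPeq] at hpos
    have hterm : ∃ i ∈ Finset.univ, 0 < p i * Q i q * R i zt := by
      by_contra hc
      push_neg at hc
      have : ∑ i, p i * Q i q * R i zt ≤ 0 :=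
        Finset.sum_nonpos fun i hi => hc i hi
      linarith
    obtain ⟨i, -, hterm⟩ := hterm
    refine ⟨i, ?_, ?_⟩
    · by_contra hQ
      push_neg at hQ
      have : Q i q = 0 := le_antisymm hQ (hQ0 i q)
      simp [this] at hterm
    · by_contra hR
      push_neg at hR
      have : R i zt = 0 := le_antisymm hR (hR0 i zt)
      simp [this] at hterm
  have hg1 : ∀ x y zt, 0 < Pt (x, y) zt → (g zt : 𝒵 → ℝ) = condZ P (x, y) := by
    intro x y zt hpos
    obtain ⟨i, hQi, hRi⟩ := exPos (x, y) zt hpos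
    have hex : ∃ j, 0 < R j zt := ⟨i, hRi⟩
    have hj : 0 < R hex.choose zt := hex.choose_spec
    have hji : hex.choose = i := by
      by_contra hne
      rcases hRd hex.choose i hne zt with h | h
      · exact absurd h (ne_of_gt hj)
      · exact absurd h (ne_of_gt hRi)
    have : g zt = ⟨S hex.choose, memC _⟩ := dif_pos hex
    rw [this]
    simp only [hji]
    exact (condC i (x, y) hQi).symm
  have margNN : ∀ q, 0 ≤ margXY P q := fun q => by
    rw [margA]; exact Finset.sum_nonneg fun zt _ => hPt0 q zt
  refine ⟨g, hg1, ?_⟩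
  intro q d
  by_cases h : 0 < margXY P q
  · have hsum : 0 < ∑ zt, Pt q zt := by rw [← margA]; exact h
    have hzt : ∃ zt, 0 < Pt q zt := by
      by_contra hc
      push_neg at hc
      have : ∑ zt, Pt q zt ≤ 0 :=
        Finset.sum_nonpos fun zt _ => hc zt
      linarith
    obtain ⟨zt0, hzt0⟩ := hzt
    obtain ⟨i, hQi, -⟩ := exPos q zt0 hzt0
    have hc : condZ P q = S i := condC i q hQi
    by_cases hd : (d : 𝒵 → ℝ) = S i
    · have hpd : purified P q d = margXY P q := by
        unfold purified
        rw [if_pos (hc.trans hd.symm)]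
      rw [hpd, margA]
      apply Finset.sum_congr rfl
      intro zt _
      by_cases hz : 0 < Pt q zt
      · have hgc : (g zt : 𝒵 → ℝ) = condZ P q := hg1 q.1 q.2 zt hz
        have hgd : g zt = d := Subtype.ext (by rw [hgc, hc, ← hd])
        rw [if_pos hgd]
      · have hz0 : Pt q zt = 0 := le_antisymm (not_lt.mp hz) (hPt0 q zt)
        simp [hz0]
    · have hpd : purified P q d = 0 := by
        unfold purified
        rw [if_neg]
        intro hcd
        exact hd (hcd.symm.trans hc)
      rw [hpd]
      symm
      apply Finset.sum_eq_zero
      intro zt _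
      by_cases hz : 0 < Pt q zt
      · have hgc : (g zt : 𝒵 → ℝ) = condZ P q := hg1 q.1 q.2 zt hz
        have : g zt ≠ d := by
          intro he
          apply hd
          rw [← he, hgc, hc]
        rw [if_neg this]
      · have hz0 : Pt q zt = 0 := le_antisymm (not_lt.mp hz) (hPt0 q zt)
        simp [hz0]
  · have hm0 : margXY P q = 0 := le_antisymm (not_lt.mp h) (margNN q)
    have hsum0 : ∑ zt, Pt q zt = 0 := by rw [← margA]; exact hm0
    have hz : ∀ zt, Pt q zt = 0 := fun zt =>
      (Finset.sum_eq_zero_iff_of_nonneg (fun zt _ => hPt0 q zt)).mp hsum0 zt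
        (Finset.mem_univ zt)
    simp [purified, hm0, hz]
end

section
/- (Privacy amplification.) Let P_{XZ} be a joint probability mass function on a finite set 𝒳 × 𝒵 and let (Xⁿ, Zⁿ) be distributed according to the n-fold product P_{XZ}^{⊗n}. For every ε > 0 there exists n₀ such that for all n ≥ n₀ there exist a natural number L ≥ 2^{n(H(X|Z)−ε)} and a hash function h : 𝒳ⁿ → {1,…,L} such that the total variation (ℓ¹) distance between the joint law of (h(Xⁿ), Zⁿ) and the product of the uniform distribution on {1,…,L} with P_Z^{⊗n} is at most ε. -/
/-!
STATEMENT 8 (Privacy amplification): Let `P` be a joint pmf on a finite set `𝒳 × 𝒵` and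
let `(Xⁿ, Zⁿ) ~ P^{⊗n}`.  For every `ε > 0` and all sufficiently large `n`, there are
`L ≥ 2^{n(H(X|Z)−ε)}` and a hash `h : 𝒳ⁿ → {1,…,L}` such that the total variation (ℓ¹)
distance between the joint law of `(h(Xⁿ), Zⁿ)` and the product of the uniform
distribution on `{1,…,L}` with `P_Z^{⊗n}` is at most `ε`.
-/

open scoped Classical
open Finset

/-- Shannon entropy in bits. -/
noncomputable def shannonEntropy {α : Type*} [Fintype α] (p : α → ℝ) : ℝ :=
  -∑ a, p a * Real.logb 2 (p a)

/-- Marginal distribution of `Z`. -/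
noncomputable def margZ {𝒳 𝒵 : Type*} [Fintype 𝒳] [Fintype 𝒵] (P : 𝒳 × 𝒵 → ℝ) : 𝒵 → ℝ :=
  fun z => ∑ x, P (x, z)

/-- Conditional entropy `H(X|Z) = H(X,Z) − H(Z)` in bits. -/
noncomputable def condEntXZ {𝒳 𝒵 : Type*} [Fintype 𝒳] [Fintype 𝒵] (P : 𝒳 × 𝒵 → ℝ) : ℝ :=
  shannonEntropy P - shannonEntropy (margZ P)


/-!
If `H(X|Z) ≤ ε` a single bin already works. Otherwise hash into `L = ⌈2^{n(H(X|Z)-ε)}⌉` bins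
and average over all hash functions. For fixed `zⁿ`, split `Pⁿ(·, zⁿ)` at the threshold
`β P_Zⁿ(zⁿ)` with `β = 2^{-n(H(X|Z)-ε/2)}`: the light part has collision mass at most
`β P_Zⁿ(zⁿ)²`, so by a second-moment computation for a uniformly random function it contributes
at most `√(Lβ) ≤ √2 · 2^{-nε/4}` in total, while the heavy part is simply charged twice its mass.
That mass is the probability that the empirical conditional self-information of `(Xⁿ, Zⁿ)`
falls short of its mean `H(X|Z)` by `ε/2`, which is `O(1/n)` by Chebyshev's inequality.
-/

section ProductWeights

variable {ι α : Type*} [Fintype ι] [DecidableEq ι] [Fintype α] (μ : α → ℝ)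

theorem sum_prod_mul_prod_eq_prod_sum (φ : ι → α → ℝ) :
    ∑ ω : ι → α, (∏ i, μ (ω i)) * ∏ i, φ i (ω i) = ∏ i, ∑ a, μ a * φ i a := by
  simp_rw [← Finset.prod_mul_distrib]
  exact (Fintype.prod_sum fun i a => μ a * φ i a).symm

variable {μ}

theorem sum_prod_mul_apply (hμ : ∑ a, μ a = 1) (i : ι) (F : α → ℝ) :
    ∑ ω : ι → α, (∏ l, μ (ω l)) * F (ω i) = ∑ a, μ a * F a := by
  have hF : ∀ ω : ι → α, F (ω i) = ∏ l, if l = i then F (ω l) else 1 := fun ω => by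
    rw [Finset.prod_ite_eq', if_pos (Finset.mem_univ i)]
  simp_rw [hF, sum_prod_mul_prod_eq_prod_sum (φ := fun l a => if l = i then F a else 1)]
  simp [apply_ite, hμ]

theorem sum_prod_mul_apply_mul_apply (hμ : ∑ a, μ a = 1) {i k : ι} (hik : i ≠ k)
    (F G : α → ℝ) :
    ∑ ω : ι → α, (∏ l, μ (ω l)) * (F (ω i) * G (ω k)) = (∑ a, μ a * F a) * ∑ a, μ a * G a := by
  have hFG : ∀ ω : ι → α, F (ω i) * G (ω k)
      = ∏ l, (if l = i then F (ω l) else 1) * (if l = k then G (ω l) else 1) := fun ω => by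
    rw [Finset.prod_mul_distrib, Finset.prod_ite_eq', Finset.prod_ite_eq',
      if_pos (Finset.mem_univ i), if_pos (Finset.mem_univ k)]
  have hfactor : ∀ l, ∑ a, μ a * ((if l = i then F a else 1) * (if l = k then G a else 1))
      = (if l = i then ∑ a, μ a * F a else 1) * (if l = k then ∑ a, μ a * G a else 1) := by
    intro l
    by_cases hli : l = i <;> by_cases hlk : l = k
    · exact absurd (hli.symm.trans hlk) hik
    all_goals simp [hli, hlk, hik, hik.symm, hμ]
  simp_rw [hFG, sum_prod_mul_prod_eq_prod_sum
    (φ := fun l a => (if l = i then F a else 1) * (if l = k then G a else 1)), hfactor,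
    Finset.prod_mul_distrib, Finset.prod_ite_eq', if_pos (Finset.mem_univ _)]

/-- Variances of independent centred summands add up. -/
theorem sum_prod_mul_sum_sq (hμ : ∑ a, μ a = 1) (f : ι → α → ℝ)
    (hf : ∀ i, ∑ a, μ a * f i a = 0) :
    ∑ ω : ι → α, (∏ l, μ (ω l)) * (∑ i, f i (ω i)) ^ 2 = ∑ i, ∑ a, μ a * f i a ^ 2 := by
  have hpair : ∀ i k, ∑ ω : ι → α, (∏ l, μ (ω l)) * (f i (ω i) * f k (ω k))
      = if i = k then ∑ a, μ a * f i a ^ 2 else 0 := by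
    intro i k
    split_ifs with hik
    · subst hik
      simpa only [sq] using sum_prod_mul_apply hμ i fun a => f i a * f i a
    · rw [sum_prod_mul_apply_mul_apply hμ hik, hf, zero_mul]
  calc ∑ ω : ι → α, (∏ l, μ (ω l)) * (∑ i, f i (ω i)) ^ 2
      = ∑ i, ∑ k, ∑ ω : ι → α, (∏ l, μ (ω l)) * (f i (ω i) * f k (ω k)) := by
        simp_rw [sq, Finset.sum_mul_sum, Finset.mul_sum]
        rw [Finset.sum_comm]
        exact Finset.sum_congr rfl fun i _ => Finset.sum_comm
    _ = ∑ i, ∑ a, μ a * f i a ^ 2 := by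
        simp_rw [hpair, Finset.sum_ite_eq, if_pos (Finset.mem_univ _)]

theorem sum_prod_filter_le_variance_div_sq (hμ0 : ∀ a, 0 ≤ μ a) (hμ : ∑ a, μ a = 1)
    (f : α → ℝ) (hf : ∑ a, μ a * f a = 0) (hι : 0 < Fintype.card ι) {δ : ℝ} (hδ : 0 < δ) :
    ∑ ω : ι → α with Fintype.card ι * δ ≤ ∑ i, f (ω i), ∏ i, μ (ω i)
      ≤ (∑ a, μ a * f a ^ 2) / (Fintype.card ι * δ ^ 2) := by
  set n : ℝ := (Fintype.card ι : ℝ)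
  have hn : 0 < n := Nat.cast_pos.mpr hι
  have hprod : ∀ ω : ι → α, 0 ≤ ∏ i, μ (ω i) := fun ω => Finset.prod_nonneg fun i _ => hμ0 _
  have hmarkov : (n * δ) ^ 2 * ∑ ω : ι → α with n * δ ≤ ∑ i, f (ω i), ∏ i, μ (ω i)
      ≤ n * ∑ a, μ a * f a ^ 2 :=
    calc (n * δ) ^ 2 * ∑ ω : ι → α with n * δ ≤ ∑ i, f (ω i), ∏ i, μ (ω i)
        ≤ ∑ ω : ι → α with n * δ ≤ ∑ i, f (ω i), (∏ i, μ (ω i)) * (∑ i, f (ω i)) ^ 2 := by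
          rw [Finset.mul_sum]
          refine Finset.sum_le_sum fun ω hω => ?_
          rw [mul_comm]
          exact mul_le_mul_of_nonneg_left
            (pow_le_pow_left₀ (by positivity) (Finset.mem_filter.mp hω).2 2) (hprod ω)
      _ ≤ ∑ ω : ι → α, (∏ i, μ (ω i)) * (∑ i, f (ω i)) ^ 2 :=
          Finset.sum_le_sum_of_subset_of_nonneg (Finset.filter_subset _ _)
            fun ω _ _ => mul_nonneg (hprod ω) (sq_nonneg _)
      _ = n * ∑ a, μ a * f a ^ 2 := by
          rw [sum_prod_mul_sum_sq hμ (fun _ => f) fun _ => hf, Finset.sum_const, nsmul_eq_mul,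
            Finset.card_univ]
  rw [le_div_iff₀ (by positivity)]
  nlinarith

end ProductWeights

section Hashing

variable {D : Type*} [Fintype D] {L : ℕ}

noncomputable def hashDeviation (h : D → Fin L) (c : D → ℝ) : ℝ :=
  ∑ j, |(∑ x, if h x = j then c x else 0) - 1 / (L : ℝ) * ∑ x, c x|

theorem hashDeviation_of_fin_one (h : D → Fin 1) (c : D → ℝ) : hashDeviation h c = 0 := by
  simp [hashDeviation, Subsingleton.elim (h _) 0]

theorem hashDeviation_add_le (h : D → Fin L) (c c' : D → ℝ) :
    hashDeviation h (c + c') ≤ hashDeviation h c + hashDeviation h c' := by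
  simp only [hashDeviation]
  rw [← Finset.sum_add_distrib]
  refine Finset.sum_le_sum fun j _ => le_of_eq_of_le ?_ (abs_add_le _ _)
  simp only [Pi.add_apply, ite_add_zero, Finset.sum_add_distrib]
  ring_nf

theorem hashDeviation_le_two_mul (h : D → Fin L) (c : D → ℝ) :
    hashDeviation h c ≤ 2 * ∑ x, |c x| := by
  have hbin : ∀ j, |∑ x, if h x = j then c x else 0| ≤ ∑ x, if h x = j then |c x| else 0 :=
    fun j => (Finset.abs_sum_le_sum_abs _ _).trans_eq <| by simp only [apply_ite abs, abs_zero]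
  have hmean : |1 / (L : ℝ) * ∑ x, c x| ≤ 1 / L * ∑ x, |c x| := by
    rw [abs_mul, abs_of_nonneg (by positivity)]
    exact mul_le_mul_of_nonneg_left (Finset.abs_sum_le_sum_abs _ _) (by positivity)
  have hL : (L : ℝ) * (1 / L) ≤ 1 := by
    rcases L.eq_zero_or_pos with rfl | hL
    · simp
    · rw [mul_one_div_cancel (by positivity)]
  calc hashDeviation h c
      ≤ ∑ j : Fin L, ((∑ x, if h x = j then |c x| else 0) + 1 / L * ∑ x, |c x|) :=
        Finset.sum_le_sum fun j _ => (abs_sub _ _).trans (add_le_add (hbin j) hmean)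
    _ = ∑ x, |c x| + L * (1 / L) * ∑ x, |c x| := by
        rw [Finset.sum_add_distrib, Finset.sum_comm]
        simp [Finset.sum_ite_eq, mul_assoc]
    _ ≤ 2 * ∑ x, |c x| := by
        nlinarith [Finset.sum_nonneg fun x (_ : x ∈ Finset.univ) => abs_nonneg (c x)]

variable [DecidableEq D]

/-- Under a uniformly random hash `h`, the indicators `[h x = j] - 1/L` are independent and
centred with variance `(1/L)(1 - 1/L)`. -/
theorem sum_sq_hashBin_sub_le (hL : 0 < L) (c : D → ℝ) (j : Fin L) :
    ∑ h : D → Fin L, ((∑ x, if h x = j then c x else 0) - 1 / (L : ℝ) * ∑ x, c x) ^ 2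
      ≤ Fintype.card (D → Fin L) * ((∑ x, c x ^ 2) / L) := by
  set N : ℝ := (Fintype.card (D → Fin L) : ℝ)
  set u : ℝ := 1 / L
  have hLr : (0 : ℝ) < L := Nat.cast_pos.mpr hL
  have hLu : (L : ℝ) * u = 1 := mul_one_div_cancel hLr.ne'
  have hu : ∑ _v : Fin L, u = 1 := by simp [hLu]
  set f : D → Fin L → ℝ := fun x v => c x * ((if v = j then 1 else 0) - u)
  have hcentre : ∀ h : D → Fin L,
      (∑ x, if h x = j then c x else 0) - u * ∑ x, c x = ∑ x, f x (h x) := fun h => by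
    rw [Finset.mul_sum]
    simp only [f, mul_sub, mul_ite, mul_one, mul_zero, Finset.sum_sub_distrib, mul_comm u]
  have hindicator : ∑ v : Fin L, ((if v = j then (1 : ℝ) else 0) - u) ^ 2 = 1 - u := by
    have hsq : ∀ v : Fin L, ((if v = j then (1 : ℝ) else 0) - u) ^ 2
        = (1 - 2 * u) * (if v = j then 1 else 0) + u ^ 2 := fun v => by split_ifs <;> ring
    simp only [hsq, Finset.sum_add_distrib, ← Finset.mul_sum, Finset.sum_ite_eq',
      Finset.mem_univ, if_true, Finset.sum_const, Finset.card_univ, Fintype.card_fin,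
      nsmul_eq_mul]
    linear_combination u * hLu
  have hmean : ∀ x, ∑ v, u * f x v = 0 := fun x => by
    simp only [f, mul_sub, mul_ite, mul_one, mul_zero, Finset.sum_sub_distrib,
      Finset.sum_ite_eq', Finset.mem_univ, if_true, Finset.sum_const, Finset.card_univ,
      Fintype.card_fin, nsmul_eq_mul]
    linear_combination (-(u * c x)) * hLu
  have hcard : N * ∏ _x : D, u = 1 := by
    simp [N, u, hLr.ne']
  calc ∑ h : D → Fin L, ((∑ x, if h x = j then c x else 0) - u * ∑ x, c x) ^ 2
      = N * ∑ h : D → Fin L, (∏ _x : D, u) * (∑ x, f x (h x)) ^ 2 := by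
        rw [← Finset.mul_sum, ← mul_assoc, hcard, one_mul]
        simp_rw [hcentre]
    _ = N * ∑ x, u * c x ^ 2 * ∑ v : Fin L, ((if v = j then (1 : ℝ) else 0) - u) ^ 2 := by
        rw [sum_prod_mul_sum_sq (μ := fun _ => u) hu f hmean]
        congr 1
        refine Finset.sum_congr rfl fun x _ => ?_
        rw [Finset.mul_sum]
        exact Finset.sum_congr rfl fun v _ => by ring
    _ ≤ N * ∑ x, u * c x ^ 2 := by
        rw [hindicator]
        refine mul_le_mul_of_nonneg_left (Finset.sum_le_sum fun x _ => ?_) (Nat.cast_nonneg _)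
        have : 0 ≤ u := by positivity
        nlinarith [mul_nonneg (mul_nonneg this this) (sq_nonneg (c x))]
    _ = N * ((∑ x, c x ^ 2) / L) := by
        rw [← Finset.mul_sum, div_eq_mul_one_div, mul_comm u]

theorem sum_abs_hashBin_sub_le (hL : 0 < L) (c : D → ℝ) (j : Fin L) :
    ∑ h : D → Fin L, |(∑ x, if h x = j then c x else 0) - 1 / (L : ℝ) * ∑ x, c x|
      ≤ Fintype.card (D → Fin L) * √((∑ x, c x ^ 2) / L) := by
  set N : ℝ := (Fintype.card (D → Fin L) : ℝ)
  set W : (D → Fin L) → ℝ := fun h => (∑ x, if h x = j then c x else 0) - 1 / (L : ℝ) * ∑ x, c x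
  calc ∑ h, |W h| ≤ √(N * ∑ h, W h ^ 2) := Real.le_sqrt_of_sq_le <| by
        simpa only [sq_abs, Finset.card_univ] using
          sq_sum_le_card_mul_sum_sq (s := Finset.univ) (f := fun h => |W h|)
    _ ≤ √(N * (N * ((∑ x, c x ^ 2) / L))) := by gcongr; exact sum_sq_hashBin_sub_le hL c j
    _ = N * √((∑ x, c x ^ 2) / L) := by
        rw [← mul_assoc, Real.sqrt_mul (by positivity), Real.sqrt_mul_self (by positivity)]

theorem sum_hashDeviation_le (hL : 0 < L) (c : D → ℝ) :
    ∑ h : D → Fin L, hashDeviation h c ≤ Fintype.card (D → Fin L) * √(L * ∑ x, c x ^ 2) := by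
  have hLr : (0 : ℝ) < L := Nat.cast_pos.mpr hL
  have hsqrt : (L : ℝ) * √((∑ x, c x ^ 2) / L) = √(L * ∑ x, c x ^ 2) := by
    rw [show (L : ℝ) * ∑ x, c x ^ 2 = L ^ 2 * ((∑ x, c x ^ 2) / L) by field_simp,
      Real.sqrt_mul (sq_nonneg _), Real.sqrt_sq hLr.le]
  calc ∑ h : D → Fin L, hashDeviation h c
      ≤ ∑ _j : Fin L, Fintype.card (D → Fin L) * √((∑ x, c x ^ 2) / L) := by
        simp only [hashDeviation]
        rw [Finset.sum_comm]
        exact Finset.sum_le_sum fun j _ => sum_abs_hashBin_sub_le hL c j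
    _ = Fintype.card (D → Fin L) * √(L * ∑ x, c x ^ 2) := by
        rw [Finset.sum_const, Finset.card_univ, Fintype.card_fin, nsmul_eq_mul, mul_left_comm,
          hsqrt]

/-- The weights above the threshold `t` are paid for in full, the others are smoothed by the
hash with a collision bound `∑ c² ≤ t ∑ c`. -/
theorem sum_hashDeviation_le_of_nonneg (hL : 0 < L) {c : D → ℝ} (hc : ∀ x, 0 ≤ c x) {t : ℝ}
    (ht : 0 ≤ t) :
    ∑ h : D → Fin L, hashDeviation h c
      ≤ Fintype.card (D → Fin L) * (√(L * (t * ∑ x, c x)) + 2 * ∑ x with t < c x, c x) := by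
  set N : ℝ := (Fintype.card (D → Fin L) : ℝ)
  set cLow : D → ℝ := fun x => if t < c x then 0 else c x
  set cHigh : D → ℝ := fun x => if t < c x then c x else 0
  have hsplit : c = cLow + cHigh :=
    funext fun x => by simp only [cLow, cHigh, Pi.add_apply]; split_ifs <;> ring
  have hcollision : ∑ x, cLow x ^ 2 ≤ t * ∑ x, c x := by
    rw [Finset.mul_sum]
    refine Finset.sum_le_sum fun x _ => ?_
    simp only [cLow]
    split_ifs with hx <;> nlinarith [hc x]
  have hHigh : ∑ x, |cHigh x| = ∑ x with t < c x, c x := by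
    rw [Finset.sum_filter]
    exact Finset.sum_congr rfl fun x _ => by
      simp only [cHigh]; split_ifs <;> simp [abs_of_nonneg (hc x)]
  calc ∑ h : D → Fin L, hashDeviation h c = ∑ h : D → Fin L, hashDeviation h (cLow + cHigh) := by
        rw [← hsplit]
    _ ≤ ∑ h : D → Fin L, (hashDeviation h cLow + 2 * ∑ x, |cHigh x|) :=
        Finset.sum_le_sum fun h _ => (hashDeviation_add_le h cLow cHigh).trans
          (add_le_add le_rfl (hashDeviation_le_two_mul h cHigh))
    _ = ∑ h : D → Fin L, hashDeviation h cLow + N * (2 * ∑ x, |cHigh x|) := by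
        rw [Finset.sum_add_distrib, Finset.sum_const, Finset.card_univ, nsmul_eq_mul]
    _ ≤ N * √(L * ∑ x, cLow x ^ 2) + N * (2 * ∑ x, |cHigh x|) :=
        add_le_add (sum_hashDeviation_le hL cLow) le_rfl
    _ ≤ N * (√(L * (t * ∑ x, c x)) + 2 * ∑ x with t < c x, c x) := by
        rw [hHigh, mul_add]
        gcongr

theorem exists_hash_sum_hashDeviation_le {Z : Type*} [Fintype Z] (hL : 0 < L)
    {c : Z → D → ℝ} (hc : ∀ z x, 0 ≤ c z x) {β : ℝ} (hβ : 0 ≤ β) :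
    ∃ h : D → Fin L, ∑ z, hashDeviation h (c z)
      ≤ √(L * β) * ∑ z, ∑ x, c z x + 2 * ∑ z, ∑ x with β * ∑ x', c z x' < c z x, c z x := by
  have : NeZero L := ⟨hL.ne'⟩
  set N : ℝ := (Fintype.card (D → Fin L) : ℝ)
  have hrow : ∀ z, √(L * (β * (∑ x, c z x) * ∑ x, c z x)) = √(L * β) * ∑ x, c z x := fun z => by
    have hz : 0 ≤ ∑ x, c z x := Finset.sum_nonneg fun x _ => hc z x
    rw [show (L : ℝ) * (β * (∑ x, c z x) * ∑ x, c z x) = L * β * ((∑ x, c z x) * ∑ x, c z x) by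
      ring, Real.sqrt_mul (by positivity), Real.sqrt_mul_self hz]
  have havg : ∑ h : D → Fin L, ∑ z, hashDeviation h (c z) ≤ ∑ _h : D → Fin L,
      (√(L * β) * ∑ z, ∑ x, c z x + 2 * ∑ z, ∑ x with β * ∑ x', c z x' < c z x, c z x) := by
    rw [Finset.sum_comm, Finset.sum_const, Finset.card_univ, nsmul_eq_mul]
    calc ∑ z, ∑ h : D → Fin L, hashDeviation h (c z)
        ≤ ∑ z, N * (√(L * (β * (∑ x, c z x) * ∑ x, c z x))
            + 2 * ∑ x with β * ∑ x', c z x' < c z x, c z x) :=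
          Finset.sum_le_sum fun z _ => sum_hashDeviation_le_of_nonneg hL (hc z)
            (mul_nonneg hβ (Finset.sum_nonneg fun x _ => hc z x))
      _ = N * (√(L * β) * ∑ z, ∑ x, c z x
            + 2 * ∑ z, ∑ x with β * ∑ x', c z x' < c z x, c z x) := by
          simp_rw [hrow, ← Finset.mul_sum, Finset.sum_add_distrib, ← Finset.mul_sum]
  obtain ⟨h, -, hh⟩ := Finset.exists_le_of_sum_le Finset.univ_nonempty havg
  exact ⟨h, hh⟩

end Hashing

theorem sum_sum_eq_sum_pi_prod {ι α β M : Type*} [Fintype ι] [DecidableEq ι] [Fintype α]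
    [Fintype β] [AddCommMonoid M] (F : (ι → α) → (ι → β) → M) :
    ∑ z, ∑ x, F x z = ∑ ω : ι → α × β, F (fun i => (ω i).1) (fun i => (ω i).2) := by
  rw [Finset.sum_comm, ← Fintype.sum_prod_type']
  exact Fintype.sum_equiv (Equiv.arrowProdEquivProdArrow _ _ _).symm _ _ fun _ => rfl

section Source

variable {𝒳 𝒵 : Type*} [Fintype 𝒳] [Fintype 𝒵] {P : 𝒳 × 𝒵 → ℝ}

theorem margZ_nonneg (h0 : ∀ w, 0 ≤ P w) (z : 𝒵) : 0 ≤ margZ P z :=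
  Finset.sum_nonneg fun x _ => h0 (x, z)

theorem sum_margZ (h1 : ∑ w, P w = 1) : ∑ z, margZ P z = 1 := by
  rw [← h1, Fintype.sum_prod_type_right]
  rfl

theorem sum_prod_eq_prod_margZ {n : ℕ} (z : Fin n → 𝒵) :
    ∑ x : Fin n → 𝒳, ∏ k, P (x k, z k) = ∏ k, margZ P (z k) :=
  (Fintype.prod_sum fun k a => P (a, z k)).symm

theorem sum_sum_prod_eq_one (h1 : ∑ w, P w = 1) (n : ℕ) :
    ∑ z : Fin n → 𝒵, ∑ x : Fin n → 𝒳, ∏ k, P (x k, z k) = 1 := by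
  simp_rw [sum_prod_eq_prod_margZ, ← Fintype.prod_sum fun (_ : Fin n) b => margZ P b,
    sum_margZ h1, Finset.prod_const_one]

theorem sum_sum_abs_sub_eq_sum_hashDeviation {n L : ℕ} (h : (Fin n → 𝒳) → Fin L) :
    ∑ j : Fin L, ∑ z : Fin n → 𝒵,
        |(∑ x : Fin n → 𝒳, if h x = j then ∏ k, P (x k, z k) else 0)
          - (1 / (L : ℝ)) * ∏ k, margZ P (z k)|
      = ∑ z : Fin n → 𝒵, hashDeviation h fun x => ∏ k, P (x k, z k) := by
  rw [Finset.sum_comm]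
  simp only [hashDeviation, sum_prod_eq_prod_margZ]

variable (P) in
/-- The conditional self-information `-log₂ P(x|z)`. -/
noncomputable def condSelfInfo (w : 𝒳 × 𝒵) : ℝ :=
  Real.logb 2 (margZ P w.2) - Real.logb 2 (P w)

theorem sum_mul_condSelfInfo : ∑ w, P w * condSelfInfo P w = condEntXZ P := by
  have hmarg : ∑ w, P w * Real.logb 2 (margZ P w.2) = ∑ z, margZ P z * Real.logb 2 (margZ P z) := by
    rw [Fintype.sum_prod_type_right]
    exact Finset.sum_congr rfl fun z _ => by dsimp only; rw [← Finset.sum_mul]; rfl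
  simp only [condSelfInfo, mul_sub, Finset.sum_sub_distrib, hmarg, condEntXZ, shannonEntropy]
  ring

theorem lt_sum_sub_condSelfInfo (h0 : ∀ w, 0 ≤ P w) {n : ℕ} {δ : ℝ} {x : Fin n → 𝒳}
    {z : Fin n → 𝒵}
    (hx : 2 ^ (-(n * (condEntXZ P - δ))) * ∏ k, margZ P (z k) < ∏ k, P (x k, z k)) :
    n * δ < ∑ k, (condEntXZ P - condSelfInfo P (x k, z k)) := by
  have hβ : (0 : ℝ) < 2 ^ (-(n * (condEntXZ P - δ))) := Real.rpow_pos_of_pos two_pos _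
  have hM0 : 0 ≤ ∏ k, margZ P (z k) := Finset.prod_nonneg fun k _ => margZ_nonneg h0 _
  have hP : ∀ k, 0 < P (x k, z k) := fun k => (h0 _).lt_of_ne fun hk => by
    rw [Finset.prod_eq_zero (f := fun k => P (x k, z k)) (Finset.mem_univ k) hk.symm] at hx
    linarith [mul_nonneg hβ.le hM0]
  have hmarg : ∀ k, 0 < margZ P (z k) := fun k =>
    (hP k).trans_le (Finset.single_le_sum (fun a _ => h0 (a, z k)) (Finset.mem_univ (x k)))
  have hM : 0 < ∏ k, margZ P (z k) := Finset.prod_pos fun k _ => hmarg k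
  have hlog := Real.logb_lt_logb one_lt_two (mul_pos hβ hM) hx
  rw [Real.logb_mul hβ.ne' hM.ne',
    Real.logb_rpow two_pos (by norm_num), Real.logb_prod _ _ fun k _ => (hmarg k).ne',
    Real.logb_prod _ _ fun k _ => (hP k).ne'] at hlog
  simp only [condSelfInfo, Finset.sum_sub_distrib, Finset.sum_const, Finset.card_univ,
    Fintype.card_fin, nsmul_eq_mul]
  linarith

/-- Chebyshev's inequality for the i.i.d. sum of conditional self-informations: the pairs whose
conditional probability exceeds `2^{-n(H(X|Z) - δ)}` carry mass `O(1/n)`. -/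
theorem sum_sum_filter_prod_le_variance_div_sq (h0 : ∀ w, 0 ≤ P w) (h1 : ∑ w, P w = 1)
    {n : ℕ} (hn : 0 < n) {δ : ℝ} (hδ : 0 < δ) :
    ∑ z : Fin n → 𝒵, ∑ x : Fin n → 𝒳 with
        2 ^ (-(n * (condEntXZ P - δ))) * ∑ x' : Fin n → 𝒳, ∏ k, P (x' k, z k) < ∏ k, P (x k, z k),
        ∏ k, P (x k, z k)
      ≤ (∑ w, P w * (condEntXZ P - condSelfInfo P w) ^ 2) / (n * δ ^ 2) := by
  have hmean : ∑ w, P w * (condEntXZ P - condSelfInfo P w) = 0 := by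
    simp only [mul_sub, Finset.sum_sub_distrib, ← Finset.sum_mul, h1, sum_mul_condSelfInfo]
    ring
  have hcheb := sum_prod_filter_le_variance_div_sq (ι := Fin n) h0 h1 _ hmean
    (by simpa using hn) hδ
  rw [Fintype.card_fin] at hcheb
  simp_rw [sum_prod_eq_prod_margZ]
  calc ∑ z : Fin n → 𝒵, ∑ x : Fin n → 𝒳 with
        2 ^ (-(n * (condEntXZ P - δ))) * ∏ k, margZ P (z k) < ∏ k, P (x k, z k),
        ∏ k, P (x k, z k)
      = ∑ ω : Fin n → 𝒳 × 𝒵, if 2 ^ (-(n * (condEntXZ P - δ))) * ∏ k, margZ P (ω k).2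
          < ∏ k, P (ω k) then ∏ k, P (ω k) else 0 := by
        simp_rw [Finset.sum_filter]
        exact sum_sum_eq_sum_pi_prod fun x z =>
          if 2 ^ (-(n * (condEntXZ P - δ))) * ∏ k, margZ P (z k) < ∏ k, P (x k, z k)
          then ∏ k, P (x k, z k) else 0
    _ ≤ ∑ ω : Fin n → 𝒳 × 𝒵 with n * δ ≤ ∑ k, (condEntXZ P - condSelfInfo P (ω k)),
          ∏ k, P (ω k) := by
        rw [Finset.sum_filter]
        refine Finset.sum_le_sum fun ω _ => ?_
        split_ifs with hbad hgood hgood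
        · exact le_rfl
        · exact absurd (lt_sum_sub_condSelfInfo (x := fun k => (ω k).1) h0 hbad).le hgood
        · exact Finset.prod_nonneg fun k _ => h0 _
        · exact le_rfl
    _ ≤ _ := hcheb

theorem exists_hash_sum_hashDeviation_le_of_le_condEntXZ (h0 : ∀ w, 0 ≤ P w)
    (h1 : ∑ w, P w = 1) {n : ℕ} (hn : 0 < n) {ε : ℝ} (hε : 0 < ε) (hεH : ε ≤ condEntXZ P) :
    ∃ (L : ℕ) (h : (Fin n → 𝒳) → Fin L), (2 : ℝ) ^ ((n : ℝ) * (condEntXZ P - ε)) ≤ L ∧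
      ∑ z : Fin n → 𝒵, hashDeviation h (fun x => ∏ k, P (x k, z k))
        ≤ √(2 * ((2 : ℝ) ^ (-(ε / 2))) ^ n)
          + 2 * ((∑ w, P w * (condEntXZ P - condSelfInfo P w) ^ 2) / (n * (ε / 2) ^ 2)) := by
  set A : ℝ := 2 ^ ((n : ℝ) * (condEntXZ P - ε))
  set β : ℝ := 2 ^ (-(n * (condEntXZ P - ε / 2)))
  have hA : 1 ≤ A := Real.one_le_rpow one_le_two (by have := sub_nonneg.2 hεH; positivity)
  have hL : 0 < ⌈A⌉₊ := Nat.ceil_pos.2 (by linarith)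
  have hβ : 0 < β := Real.rpow_pos_of_pos two_pos _
  obtain ⟨h, hh⟩ := exists_hash_sum_hashDeviation_le hL
    (c := fun (z : Fin n → 𝒵) (x : Fin n → 𝒳) => ∏ k, P (x k, z k))
    (fun z x => Finset.prod_nonneg fun k _ => h0 _) hβ.le
  refine ⟨⌈A⌉₊, h, Nat.le_ceil A, hh.trans ?_⟩
  have hLβ : ⌈A⌉₊ * β ≤ 2 * ((2 : ℝ) ^ (-(ε / 2))) ^ n :=
    calc ⌈A⌉₊ * β ≤ 2 * A * β :=
          mul_le_mul_of_nonneg_right (Nat.ceil_lt_two_mul (by linarith)).le hβ.le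
      _ = 2 * ((2 : ℝ) ^ (-(ε / 2))) ^ n := by
          rw [mul_assoc, ← Real.rpow_add two_pos, ← Real.rpow_natCast,
            ← Real.rpow_mul zero_le_two]
          ring_nf
  rw [sum_sum_prod_eq_one h1, mul_one]
  gcongr
  exact sum_sum_filter_prod_le_variance_div_sq h0 h1 hn (half_pos hε)

end Source

theorem privacy_amplification {𝒳 𝒵 : Type*} [Fintype 𝒳] [Fintype 𝒵]
    (P : 𝒳 × 𝒵 → ℝ) (h0 : ∀ w, 0 ≤ P w) (h1 : ∑ w, P w = 1) :
    ∀ ε > (0 : ℝ), ∃ n₀ : ℕ, ∀ n ≥ n₀,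
      ∃ (L : ℕ) (h : (Fin n → 𝒳) → Fin L),
        (2 : ℝ) ^ ((n : ℝ) * (condEntXZ P - ε)) ≤ (L : ℝ) ∧
        -- ℓ¹ distance between the law of (h(Xⁿ), Zⁿ) and uniform × P_Z^{⊗n} is ≤ ε
        (∑ j : Fin L, ∑ z : Fin n → 𝒵,
            |(∑ x : Fin n → 𝒳, if h x = j then ∏ k, P (x k, z k) else 0)
              - (1 / (L : ℝ)) * ∏ k, margZ P (z k)|) ≤ ε := by
  intro ε hε
  rcases le_or_gt (condEntXZ P) ε with hHε | hεH
  · refine ⟨0, fun n _ => ⟨1, fun _ => 0, ?_, ?_⟩⟩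
    · rw [Nat.cast_one]
      exact Real.rpow_le_one_of_one_le_of_nonpos one_le_two
        (mul_nonpos_of_nonneg_of_nonpos n.cast_nonneg (by linarith))
    · rw [sum_sum_abs_sub_eq_sum_hashDeviation]
      simp only [hashDeviation_of_fin_one, Finset.sum_const_zero, hε.le]
  · set V := ∑ w, P w * (condEntXZ P - condSelfInfo P w) ^ 2
    have hr : (2 : ℝ) ^ (-(ε / 2)) < 1 :=
      Real.rpow_lt_one_of_one_lt_of_neg one_lt_two (by linarith)
    have hbound : Filter.Tendsto (fun n : ℕ => √(2 * ((2 : ℝ) ^ (-(ε / 2))) ^ n)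
        + 2 * (V / (n * (ε / 2) ^ 2))) Filter.atTop (nhds 0) := by
      simpa using (((tendsto_pow_atTop_nhds_zero_of_lt_one (by positivity) hr).const_mul 2).sqrt.add
        ((tendsto_const_nhds.div_atTop
          (tendsto_natCast_atTop_atTop.atTop_mul_const (by positivity))).const_mul 2))
    obtain ⟨n₀, hn₀⟩ := Filter.eventually_atTop.mp
      ((hbound.eventually (gt_mem_nhds hε)).and (Filter.eventually_gt_atTop 0))
    refine ⟨n₀, fun n hn => ?_⟩
    obtain ⟨L, h, hL, hdev⟩ :=
      exists_hash_sum_hashDeviation_le_of_le_condEntXZ h0 h1 (hn₀ n hn).2 hε hεH.le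
    refine ⟨L, h, hL, ?_⟩
    rw [sum_sum_abs_sub_eq_sum_hashDeviation]
    exact hdev.trans (hn₀ n hn).1.le
end

section
/- (Classical no-cloning.) Let P_{XYZ} be a joint probability mass function on a finite set 𝒳 × 𝒴 × 𝒵 and let N be a stochastic map from 𝒳 to 𝒳 (a broadcasting channel producing X̂ from X alone). Consider the joint law of (X, X̂, Y, Z) in which (X, Y, Z) ~ P_{XYZ} and, conditionally on X = x, X̂ ~ N(·|x) independently of (Y,Z). Suppose that for every (y,z) with P_{YZ}(y,z) > 0, conditionally on (Y,Z) = (y,z), the variable X̂ has distribution P_{X|Y=y,Z=z} and is independent of X. Then for any two pairs (y,z) and (y',z') in the support of P_{YZ}, the conditional distributions P_{X|Y=y,Z=z} and P_{X|Y=y',Z=z'} are either identical or have disjoint supports. -/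
/-!
STATEMENT 10 (Classical no-cloning): Let `P` be a joint pmf on `𝒳 × 𝒴 × 𝒵` and let `N` be
a stochastic map from `𝒳` to `𝒳` producing `X̂` from `X` alone (so that, conditionally on
`X = x`, `X̂ ~ N(·|x)` independently of `(Y,Z)`; the joint law of `(X,X̂,Y,Z)` is
`P(x,y,z)·N(x̂|x)`).  Suppose that for every `(y,z)` in the support of `P_{YZ}`,
conditionally on `(Y,Z) = (y,z)` the variable `X̂` has distribution `P_{X|Y=y,Z=z}` and is
independent of `X`; i.e. the conditional joint law of `(X,X̂)` factorizes as
`P_{X|yz}(x)·P_{X|yz}(x̂)`.  Then any two conditional distributions `P_{X|Y=y,Z=z}` and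
`P_{X|Y=y',Z=z'}` (for support points) are either identical or have disjoint supports.
-/

open Finset

theorem classical_no_cloning {𝒳 𝒴 𝒵 : Type*} [Fintype 𝒳] [Fintype 𝒴] [Fintype 𝒵]
    (P : 𝒳 → 𝒴 → 𝒵 → ℝ)
    (h0 : ∀ x y z, 0 ≤ P x y z) (h1 : ∑ x, ∑ y, ∑ z, P x y z = 1)
    (N : 𝒳 → 𝒳 → ℝ) (hN0 : ∀ x xh, 0 ≤ N x xh) (hN1 : ∀ x, ∑ xh, N x xh = 1)
    -- hypothesis: given (Y,Z) = (y,z) in the support, the conditional joint law of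
    -- (X, X̂) equals P_{X|yz}(x) · P_{X|yz}(x̂)  (so X̂ ~ P_{X|yz}, independent of X)
    (hclone : ∀ y z, 0 < (∑ x, P x y z) → ∀ x xh,
      (P x y z / (∑ x', P x' y z)) * N x xh
        = (P x y z / (∑ x', P x' y z)) * (P xh y z / (∑ x', P x' y z))) :
    ∀ y z y' z', 0 < (∑ x, P x y z) → 0 < (∑ x, P x y' z') →
      -- the two conditional distributions are identical ...
      (∀ x, P x y z / (∑ x', P x' y z) = P x y' z' / (∑ x', P x' y' z')) ∨
      -- ... or have disjoint supports
      (∀ x, P x y z / (∑ x', P x' y z) = 0 ∨ P x y' z' / (∑ x', P x' y' z') = 0) := by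
  intro y z y' z' hS hS'
  by_cases hdisj : ∀ x, P x y z / (∑ x', P x' y z) = 0 ∨ P x y' z' / (∑ x', P x' y' z') = 0
  · exact Or.inr hdisj
  · left
    push_neg at hdisj
    obtain ⟨x0, hx0, hx0'⟩ := hdisj
    have key : ∀ xh, N x0 xh = P xh y z / (∑ x', P x' y z) := fun xh =>
      mul_left_cancel₀ hx0 (hclone y z hS x0 xh)
    have key' : ∀ xh, N x0 xh = P xh y' z' / (∑ x', P x' y' z') := fun xh =>
      mul_left_cancel₀ hx0' (hclone y' z' hS' x0 xh)
    intro x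
    rw [← key x, ← key' x]
end
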